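/- arXiv:gr-qc/9910103 — 5 statements merged into one kernel-verified Lean document; each statement's English description precedes it below -/
import Mathlib

section
/- Let n ≥ 1, let F : ℝ → M_n(ℝ) be a function with values in the real n×n matrices, and suppose F has derivative F'(s₀) at the point s₀ (in the sense HasDerivAt). Then the map s ↦ exp(F(s)) (matrix exponential) has a derivative at s₀, given by d/ds exp(F(s))|_{s=s₀} = ∫₀¹ exp(t·F(s₀)) · F'(s₀) · exp((1−t)·F(s₀)) dt. -/
/-!
Duhamel's formula `exp P - exp Q = ∫₀¹ exp (t • P) * (P - Q) * exp ((1 - t) • Q) dt` is the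
fundamental theorem of calculus for `t ↦ exp (t • P) * exp ((1 - t) • Q)`. Applied with
`P = F s`, `Q = F s₀`, it writes the difference quotient of `exp ∘ F` at `s₀` as
`∫₀¹ exp (t • F s) * X * exp ((1 - t) • F s₀) dt` with `X` the difference quotient of `F`.
This integral depends continuously on `(F s, X)`, which tends to `(F s₀, F')`.
-/

open NormedSpace Filter Topology

section

variable {𝔸 : Type*} [NormedRing 𝔸] [NormedAlgebra ℝ 𝔸] [CompleteSpace 𝔸]

/- `NormedSpace.exp_continuous` requires a `ℚ`-algebra instance; analyticity over `ℝ` does not. -/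
@[fun_prop]
theorem exp_continuous_of_real : Continuous (exp : 𝔸 → 𝔸) :=
  continuous_iff_continuousAt.2 fun x => (exp_analytic (𝕂 := ℝ) x).continuousAt

theorem hasDerivAt_exp_smul_mul_exp_one_sub_smul (P Q : 𝔸) (t : ℝ) :
    HasDerivAt (fun u : ℝ => exp (u • P) * exp ((1 - u) • Q))
      (exp (t • P) * (P - Q) * exp ((1 - t) • Q)) t := by
  have hQ : HasDerivAt (fun u : ℝ => exp ((1 - u) • Q)) (-(Q * exp ((1 - t) • Q))) t := by
    simpa [Function.comp_def] using
      (hasDerivAt_exp_smul_const' Q (1 - t)).scomp t ((hasDerivAt_id t).const_sub 1)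
  refine ((hasDerivAt_exp_smul_const P t).mul hQ).congr_deriv ?_
  noncomm_ring

theorem exp_sub_exp_eq_intervalIntegral (P Q : 𝔸) :
    exp P - exp Q = ∫ t in (0 : ℝ)..1, exp (t • P) * (P - Q) * exp ((1 - t) • Q) := by
  have hcont : Continuous fun t : ℝ => exp (t • P) * (P - Q) * exp ((1 - t) • Q) := by
    fun_prop
  rw [intervalIntegral.integral_eq_sub_of_hasDerivAt
    (fun t _ => hasDerivAt_exp_smul_mul_exp_one_sub_smul P Q t) (hcont.intervalIntegrable 0 1)]
  simp

theorem continuous_intervalIntegral_exp_smul_mul_mul_exp (Q : 𝔸) :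
    Continuous fun p : 𝔸 × 𝔸 => ∫ t in (0 : ℝ)..1, exp (t • p.1) * p.2 * exp ((1 - t) • Q) :=
  intervalIntegral.continuous_parametric_intervalIntegral_of_continuous' (by fun_prop) 0 1

theorem HasDerivAt.normedSpace_exp {F : ℝ → 𝔸} {F' : 𝔸} {s₀ : ℝ} (hF : HasDerivAt F F' s₀) :
    HasDerivAt (fun s => NormedSpace.exp (F s))
      (∫ t in (0 : ℝ)..1,
        NormedSpace.exp (t • F s₀) * F' * NormedSpace.exp ((1 - t) • F s₀)) s₀ := by
  have hslope : ∀ s, slope (fun s => NormedSpace.exp (F s)) s₀ s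
      = ∫ t in (0 : ℝ)..1,
          NormedSpace.exp (t • F s) * slope F s₀ s * NormedSpace.exp ((1 - t) • F s₀) := by
    intro s
    simp only [slope_def_module, exp_sub_exp_eq_intervalIntegral (F s),
      ← intervalIntegral.integral_smul, mul_smul_comm, smul_mul_assoc]
  have hF₀ : Tendsto F (𝓝[≠] s₀) (𝓝 (F s₀)) :=
    hF.continuousAt.tendsto.mono_left nhdsWithin_le_nhds
  rw [hasDerivAt_iff_tendsto_slope] at hF ⊢
  refine Tendsto.congr (fun s => (hslope s).symm) ?_
  exact ((continuous_intervalIntegral_exp_smul_mul_mul_exp (F s₀)).tendsto (F s₀, F')).comp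
    (hF₀.prodMk_nhds hF)

end

attribute [local instance] Matrix.linftyOpNormedAddCommGroup Matrix.linftyOpNormedRing
  Matrix.linftyOpNormedAlgebra

theorem deriv_matrix_exp_general {n : ℕ}
    (F : ℝ → Matrix (Fin n) (Fin n) ℝ) (F' : Matrix (Fin n) (Fin n) ℝ) (s₀ : ℝ)
    (hF : HasDerivAt F F' s₀) :
    HasDerivAt (fun s => NormedSpace.exp (F s))
      (∫ t in (0:ℝ)..1,
        NormedSpace.exp (t • F s₀) * F' * NormedSpace.exp ((1 - t) • F s₀)) s₀ :=
  hF.normedSpace_exp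

theorem deriv_matrix_exp {n : ℕ} (hn : 1 ≤ n)
    (F : ℝ → Matrix (Fin n) (Fin n) ℝ) (F' : Matrix (Fin n) (Fin n) ℝ) (s₀ : ℝ)
    (hF : HasDerivAt F F' s₀) :
    HasDerivAt (fun s => NormedSpace.exp (F s))
      (∫ t in (0:ℝ)..1,
        NormedSpace.exp (t • F s₀) * F' * NormedSpace.exp ((1 - t) • F s₀)) s₀ :=
  deriv_matrix_exp_general F F' s₀ hF
end

section
/- Let E₃ be the real 3×3 matrix with entries (E₃)_{ij} = ε_{3ij}. If k is a natural number and Φ is an invertible real 3×3 matrix satisfying E₃·Φ = k·(Φ·E₃), then k = 1. (Thus among the sectors λ_k classifying symmetric bundles for locally rotationally symmetric models, only k = 1 admits a nondegenerate solution of the Higgs equation.) -/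
/- STATEMENT 4: if E₃ has entries (E₃)_{ij} = ε_{3ij} (indices 1,2,3 are
represented by 0,1,2 in `Fin 3`), k ∈ ℕ and Φ is an invertible real 3×3
matrix with E₃·Φ = k·(Φ·E₃), then k = 1. -/

/-- The totally antisymmetric Levi-Civita symbol on `Fin 3` (so that
`ε 0 1 2 = 1`, corresponding to ε_{123} = 1 in 1-based index notation). -/
noncomputable def ε (i j k : Fin 3) : ℝ :=
  (((j : ℕ) : ℝ) - ((i : ℕ) : ℝ)) * (((k : ℕ) : ℝ) - ((i : ℕ) : ℝ)) *
    (((k : ℕ) : ℝ) - ((j : ℕ) : ℝ)) / 2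

/-- The matrix (E₃)_{ij} = ε_{3ij}, i.e. E₃ = [[0,1,0],[−1,0,0],[0,0,0]]. -/
noncomputable def E₃ : Matrix (Fin 3) (Fin 3) ℝ := Matrix.of fun i j => ε 2 i j

theorem higgs_sector_k_eq_one (k : ℕ) (Φ : Matrix (Fin 3) (Fin 3) ℝ)
    (hΦ : IsUnit Φ) (h : E₃ * Φ = (k : ℝ) • (Φ * E₃)) : k = 1 := by
  have hE : E₃ = !![0,1,0;-1,0,0;0,0,0] := by
    ext i j
    fin_cases i <;> fin_cases j <;> norm_num [E₃, ε, Matrix.vecHead, Matrix.vecTail]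
  rw [hE] at h
  have hd : Φ.det ≠ 0 := by
    rw [Matrix.isUnit_iff_isUnit_det, isUnit_iff_ne_zero] at hΦ
    exact hΦ
  by_contra hk
  have hk2 : (k : ℝ) * (k : ℝ) - 1 ≠ 0 := by
    intro hc
    apply hk
    have h1 : (k : ℝ) * (k : ℝ) = 1 := by linarith
    have h2 : (k * k : ℕ) = 1 := by exact_mod_cast h1
    have hk1 : k ≤ 1 := Nat.le_of_dvd one_pos ⟨k, h2.symm⟩
    have hk0 : k ≠ 0 := by rintro rfl; simp at h2
    omega
  have e01 := congrFun (congrFun h 0) 1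
  have e10 := congrFun (congrFun h 1) 0
  have e00 := congrFun (congrFun h 0) 0
  have e11 := congrFun (congrFun h 1) 1
  have e12 := congrFun (congrFun h 1) 2
  simp [Matrix.mul_apply, Fin.sum_univ_three, Matrix.vecHead, Matrix.vecTail] at e01 e10 e00 e11 e12
  have hΦ00 : Φ 0 0 = 0 := by
    have h3 : ((k : ℝ) * (k : ℝ) - 1) * Φ 0 0 = 0 := by nlinarith [e01, e10]
    rcases mul_eq_zero.mp h3 with hc | hc
    · exact absurd hc hk2
    · exact hc
  have hΦ01 : Φ 0 1 = 0 := by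
    have h3 : ((k : ℝ) * (k : ℝ) - 1) * Φ 0 1 = 0 := by nlinarith [e00, e11]
    rcases mul_eq_zero.mp h3 with hc | hc
    · exact absurd hc hk2
    · exact hc
  have hΦ02 : Φ 0 2 = 0 := by linarith [e12]
  apply hd
  rw [Matrix.det_fin_three, hΦ00, hΦ01, hΦ02]
  ring
end

section
/- Let g ∈ SU(2) and let Λ be a real 3×3 matrix such that g⁻¹·τ_i·g = Σ_{j=1}^{3} Λ_{ji}·τ_j for all i = 1, 2, 3. Then Σ_{i,j,k=1}^{3} ε_{ijk}·Λ_{il}·Λ_{jm}·Λ_{kn} = ε_{lmn} for all l, m, n (equivalently, det Λ = 1, so that Λ ∈ SO(3)). -/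
/-- The Pauli matrices σ₁, σ₂, σ₃ (indexed by `Fin 3`). -/
noncomputable def σ : Fin 3 → Matrix (Fin 2) (Fin 2) ℂ :=
  ![!![0, 1; 1, 0], !![0, -Complex.I; Complex.I, 0], !![1, 0; 0, -1]]

/-- The su(2) generators τ_i = −(i/2)·σ_i. -/
noncomputable def τ (i : Fin 3) : Matrix (Fin 2) (Fin 2) ℂ :=
  (-(Complex.I / 2)) • σ i

/- Conjugation by `g` is a trace-preserving algebra automorphism `φ` of `M₂(ℂ)`, and `Λ` is the
matrix of `φ` on the span of the `τ`'s. Since `tr (τ_a τ_b) = -δ_ab / 2`, preserving the trace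
form makes `Λ` orthogonal. Since `[τ_l, τ_m] = Σ_k ε_lmk τ_k`, preserving commutators gives
`Σ_ij ε_ijq Λ_il Λ_jm = Σ_k ε_lmk Λ_qk`; contracting with `Λ_qn` and using `Λᵀ Λ = 1` yields the
claim. -/

open Matrix

theorem sum_mul_mul_mul_eq_of_transpose_mul_self_eq_one {ι R : Type*} [Fintype ι] [DecidableEq ι]
    [CommSemiring R] (e : ι → ι → ι → R) {Λ : Matrix ι ι R} (hΛ : Λᵀ * Λ = 1)
    (he : ∀ l m q, ∑ i, ∑ j, e i j q * Λ i l * Λ j m = ∑ k, e l m k * Λ q k) (l m n : ι) :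
    ∑ i, ∑ j, ∑ k, e i j k * Λ i l * Λ j m * Λ k n = e l m n :=
  calc ∑ i, ∑ j, ∑ k, e i j k * Λ i l * Λ j m * Λ k n
      = ∑ k, (∑ i, ∑ j, e i j k * Λ i l * Λ j m) * Λ k n := by
        rw [Finset.sum_comm_cycle]; simp only [Finset.sum_mul]
    _ = ∑ p, e l m p * (Λᵀ * Λ) p n := by
        simp only [he, Finset.sum_mul, mul_apply, transpose_apply, Finset.mul_sum]
        rw [Finset.sum_comm]
        exact Finset.sum_congr rfl fun p _ => Finset.sum_congr rfl fun k _ => by ring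
    _ = e l m n := by simp [hΛ, one_apply]

attribute [local instance] LieRing.ofAssociativeRing

theorem trace_τ_mul_τ (a b : Fin 3) : (τ a * τ b).trace = if a = b then -(1 / 2) else 0 := by
  fin_cases a <;> fin_cases b <;>
    simp [τ, σ, trace_fin_two, Complex.ext_iff] <;> norm_num

theorem lie_τ_τ (l m : Fin 3) : ⁅τ l, τ m⁆ = ∑ k, (ε l m k : ℂ) • τ k := by
  fin_cases l <;> fin_cases m <;> ext a b <;> fin_cases a <;> fin_cases b <;>
    simp [Ring.lie_def, τ, σ, ε, Fin.sum_univ_three] <;> ring_nf <;> simp [Complex.ext_iff] <;>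
    norm_num

theorem trace_sum_smul_τ_mul_τ (c : Fin 3 → ℂ) (q : Fin 3) :
    ((∑ a, c a • τ a) * τ q).trace = -(1 / 2) * c q := by
  simp [Finset.sum_mul, trace_sum, trace_τ_mul_τ, mul_comm]

theorem trace_sum_smul_τ_mul_sum_smul_τ (c d : Fin 3 → ℂ) :
    ((∑ a, c a • τ a) * ∑ b, d b • τ b).trace = -(1 / 2) * ∑ a, c a * d a := by
  simp only [Finset.mul_sum, Matrix.mul_smul, trace_sum, trace_smul, trace_sum_smul_τ_mul_τ,
    smul_eq_mul]
  exact Finset.sum_congr rfl fun a _ => by ring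

theorem linearIndependent_τ : LinearIndependent ℂ τ := by
  refine Fintype.linearIndependent_iff.2 fun c hc q => ?_
  have h := trace_sum_smul_τ_mul_τ c q
  rw [hc, Matrix.zero_mul, trace_zero] at h
  simpa using h.symm

theorem lie_sum_smul_τ (c d : Fin 3 → ℂ) :
    ⁅∑ i, c i • τ i, ∑ j, d j • τ j⁆ = ∑ k, (∑ i, ∑ j, (ε i j k : ℂ) * c i * d j) • τ k := by
  simp only [sum_lie, lie_sum, smul_lie, lie_smul, lie_τ_τ, Finset.smul_sum, smul_smul,
    Finset.sum_smul]
  rw [Finset.sum_comm, Finset.sum_comm_cycle]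
  exact Finset.sum_congr rfl fun k _ => Finset.sum_congr rfl fun i _ =>
    Finset.sum_congr rfl fun j _ => by ring_nf

section AlgHom

variable {Λ : Matrix (Fin 3) (Fin 3) ℂ}
  {φ : Matrix (Fin 2) (Fin 2) ℂ →ₐ[ℂ] Matrix (Fin 2) (Fin 2) ℂ}

theorem transpose_mul_self_eq_one_of_map_τ (hφ : ∀ X, (φ X).trace = X.trace)
    (hΛ : ∀ i, φ (τ i) = ∑ j, Λ j i • τ j) : Λᵀ * Λ = 1 := by
  ext p q
  have h := hφ (τ p * τ q)
  rw [map_mul, hΛ, hΛ, trace_sum_smul_τ_mul_sum_smul_τ, trace_τ_mul_τ] at h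
  simp only [mul_apply, transpose_apply, one_apply]
  split_ifs at h ⊢ <;> simpa using h

theorem sum_ε_mul_mul_eq_of_map_τ (hΛ : ∀ i, φ (τ i) = ∑ j, Λ j i • τ j) (l m q : Fin 3) :
    ∑ i, ∑ j, (ε i j q : ℂ) * Λ i l * Λ j m = ∑ k, (ε l m k : ℂ) * Λ q k := by
  have h : ⁅φ (τ l), φ (τ m)⁆ = φ ⁅τ l, τ m⁆ := by simp [Ring.lie_def]
  rw [hΛ, hΛ, lie_sum_smul_τ, lie_τ_τ, map_sum] at h
  simp only [map_smul, hΛ, Finset.smul_sum, smul_smul] at h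
  rw [Finset.sum_comm] at h
  simp_rw [← Finset.sum_smul] at h
  exact Fintype.linearIndependent_iffₛ.1 linearIndependent_τ _ _ h q

end AlgHom

theorem adjoint_rep_preserves_epsilon
    (g : Matrix (Fin 2) (Fin 2) ℂ) (hg : g ∈ Matrix.specialUnitaryGroup (Fin 2) ℂ)
    (Λ : Matrix (Fin 3) (Fin 3) ℝ)
    (hΛ : ∀ i, g⁻¹ * τ i * g = ∑ j, (Λ j i : ℂ) • τ j) :
    ∀ l m n, (∑ i, ∑ j, ∑ k, ε i j k * Λ i l * Λ j m * Λ k n) = ε l m n := by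
  intro l m n
  have hu : IsUnit g := (isUnit_iff_isUnit_det g).2 <| by
    simp [(mem_specialUnitaryGroup_iff.mp hg).2]
  let φ := MulSemiringAction.toAlgEquiv ℂ (Matrix (Fin 2) (Fin 2) ℂ) (ConjAct.toConjAct hu.unit⁻¹)
  have hφ (X : Matrix (Fin 2) (Fin 2) ℂ) : φ X = g⁻¹ * X * g := by
    simp [φ, ConjAct.units_smul_def, coe_units_inv]
  have hΛφ (i : Fin 3) : φ.toAlgHom (τ i) = ∑ j, Λ.map Complex.ofReal j i • τ j :=
    (hφ _).trans (hΛ i)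
  have horth := transpose_mul_self_eq_one_of_map_τ (fun X => (hφ X).symm ▸ trace_conj' hu X) hΛφ
  have h := sum_mul_mul_mul_eq_of_transpose_mul_self_eq_one (fun i j k => (ε i j k : ℂ))
    horth (sum_ε_mul_mul_eq_of_map_τ hΛφ) l m n
  simp only [map_apply] at h
  exact_mod_cast h
end

section
/- Let n₁, n₂, n₃ and a, b, c, p_a, p_b, p_c be real numbers. Set c^K_{IJ} := ε_{IJK}·n_K (no sum over K), φ^i_1 := 2^{−1/2}·(a, b, 0)^i, φ^i_2 := 2^{−1/2}·(−b, a, 0)^i, φ^i_3 := (0, 0, c)^i, p^1_i := 2^{−1/2}·(p_a, p_b, 0)_i, p^2_i := 2^{−1/2}·(−p_b, p_a, 0)_i, p^3_i := (0, 0, p_c)_i, and F^i_{IJ} := −Σ_K φ^i_K·c^K_{IJ} + Σ_{j,k} ε_{ijk}·φ^j_I·φ^k_J. Then Σ_{i,j,k,I,J} ε_{ijk}·F^i_{IJ}·p^I_j·p^J_k = −(n₁ + n₂)·(a·p_a + b·p_b)·p_c − n₃·c·(p_a² + p_b²) + (a·p_a + b·p_b + c·p_c)² − (1/2)·(a·p_a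 + b·p_b)² − (c·p_c)² + (1/2)·(a·p_b − b·p_a)². (This is the reduced Euclidean part of the Hamiltonian constraint for locally rotationally symmetric models.) -/
theorem lrs_euclidean_hamiltonian_constraint (n₁ n₂ n₃ a b c pa pb pc : ℝ) :
    let s : ℝ := (2 : ℝ) ^ (-(1 / 2) : ℝ)
    let φ : Fin 3 → Fin 3 → ℝ := fun i I =>
      ![![s * a, s * b, 0], ![-(s * b), s * a, 0], ![0, 0, c]] I i
    let p : Fin 3 → Fin 3 → ℝ := fun I i =>
      ![![s * pa, s * pb, 0], ![-(s * pb), s * pa, 0], ![0, 0, pc]] I i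
    let cs : Fin 3 → Fin 3 → Fin 3 → ℝ := fun K I J => ε I J K * ![n₁, n₂, n₃] K
    let F : Fin 3 → Fin 3 → Fin 3 → ℝ := fun i I J =>
      -(∑ K, φ i K * cs K I J) + ∑ j, ∑ k, ε i j k * φ j I * φ k J
    (∑ i, ∑ j, ∑ k, ∑ I, ∑ J, ε i j k * F i I J * p I j * p J k)
      = -(n₁ + n₂) * (a * pa + b * pb) * pc - n₃ * c * (pa ^ 2 + pb ^ 2)
        + (a * pa + b * pb + c * pc) ^ 2 - (1 / 2) * (a * pa + b * pb) ^ 2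
        - (c * pc) ^ 2 + (1 / 2) * (a * pb - b * pa) ^ 2 := by
  intro s φ p cs F
  have hs : s * s = 1 / 2 := by
    simp only [s, ← Real.rpow_add two_pos]
    norm_num
  simp only [F, φ, p, cs, ε, Fin.sum_univ_three]
  norm_num [Matrix.cons_val_zero, Matrix.cons_val_one, Matrix.head_cons,
    Matrix.cons_val_two, Matrix.tail_cons]
  have hs2 : s ^ 2 = 1/2 := by rw [pow_two]; exact hs
  have hs4 : s ^ 4 = 1/4 := by
    have h : s ^ 4 = (s ^ 2) ^ 2 := by ring
    rw [h, hs2]; norm_num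
  ring_nf
  rw [hs2, hs4]
  ring
end

section
/- Let n₁, n₂, n₃ and a, b, c, p_a, p_b, p_c be real numbers. Set c^K_{IJ} := ε_{IJK}·n_K (no sum over K), φ^i_1 := 2^{−1/2}·(a, b, 0)^i, φ^i_2 := 2^{−1/2}·(−b, a, 0)^i, φ^i_3 := (0, 0, c)^i, p^1_i := 2^{−1/2}·(p_a, p_b, 0)_i, p^2_i := 2^{−1/2}·(−p_b, p_a, 0)_i, p^3_i := (0, 0, p_c)_i. Then −Σ_{i,J,K} c^K_{3J}·φ^i_K·p^J_i = −(1/2)·(n₁ + n₂)·(a·p_b − b·p_a). (This is the reduced diffeomorphism constraint of locally rotationally symmetric models, which vanishes whenever the reduced Gauß constraint a·p_b − b·p_a does.) -/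
theorem lrs_diffeomorphism_constraint (n₁ n₂ n₃ a b c pa pb pc : ℝ) :
    let s : ℝ := (2 : ℝ) ^ (-(1 / 2) : ℝ)
    let φ : Fin 3 → Fin 3 → ℝ := fun i I =>
      ![![s * a, s * b, 0], ![-(s * b), s * a, 0], ![0, 0, c]] I i
    let p : Fin 3 → Fin 3 → ℝ := fun I i =>
      ![![s * pa, s * pb, 0], ![-(s * pb), s * pa, 0], ![0, 0, pc]] I i
    let cs : Fin 3 → Fin 3 → Fin 3 → ℝ := fun K I J => ε I J K * ![n₁, n₂, n₃] K
    (-(∑ i, ∑ J, ∑ K, cs K 2 J * φ i K * p J i)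
      = -(1 / 2) * (n₁ + n₂) * (a * pb - b * pa)) := by
  have hs : ((2 : ℝ) ^ (-(1 / 2) : ℝ)) ^ 2 = 1 / 2 := by
    rw [← Real.rpow_natCast ((2:ℝ) ^ (-(1/2):ℝ)) 2, ← Real.rpow_mul (by norm_num)]
    norm_num
  intro s φ p cs
  simp only [Fin.sum_univ_three, φ, p, cs, ε, Fin.isValue, Matrix.cons_val_zero,
    Matrix.cons_val_one, Matrix.head_cons, Matrix.cons_val_two, Matrix.tail_cons]
  norm_num
  linear_combination (-(n₁ + n₂) * (a * pb - b * pa)) * hs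
end
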